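/- Let Y_1, ..., Y_n be i.i.d. random variables with a common log-normal distribution (Y_i = e^{Z_i} where Z_i is normal with mean μ and variance σ² > 0). If a = (a_1, ..., a_n) and b = (b_1, ..., b_n) are vectors of positive reals such that (log a_1, ..., log a_n) is majorized by (log b_1, ..., log b_n), then ∑_{i=1}^n a_i Y_i ≤_st ∑_{i=1}^n b_i Y_i. -/

import Mathlib

/-!
Write `a k * Y k = exp (log (a k) + Z k)`. Since `log a ≺ log b`, the vector `log a` is reached
from `log b` by finitely many transfers, each changing two coordinates, keeping their sum and not
increasing their distance (Hardy–Littlewood–Pólya), so it suffices to show that one transfer,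
between coordinates `i` and `j`, does not increase the probability. Conditioning on the other
coordinates, which are independent of `(Z i, Z j)`, reduces this to two variables. For i.i.d.
Gaussians, `U = (Z i + Z j) / 2` and `W = (Z i - Z j) / 2` are jointly Gaussian and uncorrelated,
hence independent, and
`exp (α + Z i) + exp (α' + Z j) = 2 exp ((α + α') / 2 + U) cosh (W + (α - α') / 2)`.
Given `U`, the event is `{m < |W + δ|}` with `δ = (α - α') / 2`; its probability increases with
`|δ|` because the centered Gaussian density is even and decreasing in `|x|`.
-/

open MeasureTheory ProbabilityTheory

/-- `a` is majorized by `b` (written `a ≺ b`). -/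
def IsMajorizedBy {n : ℕ} (a b : Fin n → ℝ) : Prop :=
  (∑ i, a i = ∑ i, b i) ∧
  ∀ k : Fin n, ∑ i ∈ Finset.Ici k, a (Tuple.sort a i) ≤ ∑ i ∈ Finset.Ici k, b (Tuple.sort b i)

section Majorization

open Finset

variable {ι : Type*}

def IsTransfer (β β' : ι → ℝ) : Prop :=
  ∃ i j, i ≠ j ∧ (∀ k, k ≠ i → k ≠ j → β' k = β k) ∧
    β' i + β' j = β i + β j ∧ |β' i - β' j| ≤ |β i - β j|

def IsMajorizedOn (S : Finset ι) (α β : ι → ℝ) : Prop :=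
  ∑ k ∈ S, α k = ∑ k ∈ S, β k ∧
    ∀ s ⊆ S, ∃ t ⊆ S, #t = #s ∧ ∑ k ∈ s, α k ≤ ∑ k ∈ t, β k

theorem sum_le_sum_of_card_eq_of_le_of_ge {s t : Finset ι} {f g : ι → ℝ} {a : ℝ}
    (hst : #s = #t) (hf : ∀ k ∈ s, f k ≤ a) (hg : ∀ k ∈ t, a ≤ g k) : ∑ k ∈ s, f k ≤ ∑ k ∈ t, g k :=
  (sum_le_card_nsmul s f a hf).trans (hst ▸ card_nsmul_le_sum t g a hg)

theorem IsMajorizedOn.exists_le {S : Finset ι} {α β : ι → ℝ} (h : IsMajorizedOn S α β) {i : ι}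
    (hi : i ∈ S) : ∃ p ∈ S, α i ≤ β p := by
  obtain ⟨t, htS, hcard, hle⟩ := h.2 {i} (singleton_subset_iff.2 hi)
  obtain ⟨p, rfl⟩ := card_eq_one.1 (hcard.trans (card_singleton i))
  exact ⟨p, htS (mem_singleton_self p), by simpa using hle⟩

variable [DecidableEq ι]

theorem sum_le_sum_of_card_eq_of_dominates {s s' : Finset ι} {f : ι → ℝ} (hcard : #s = #s')
    (htop : ∀ x ∈ s', ∀ y ∉ s', f y ≤ f x) : ∑ k ∈ s, f k ≤ ∑ k ∈ s', f k := by
  have hcard' : #(s \ s') = #(s' \ s) := by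
    have := card_sdiff_add_card_inter s s'
    have := card_sdiff_add_card_inter s' s
    rw [inter_comm] at this
    omega
  rw [← sum_inter_add_sum_sdiff s s', ← sum_inter_add_sum_sdiff s' s, inter_comm]
  gcongr _ + ?_
  rcases (s' \ s).eq_empty_or_nonempty with he | hne
  · rw [he, card_empty, card_eq_zero] at hcard'
    simp [he, hcard']
  obtain ⟨x, hx, hxmin⟩ := exists_min_image (s' \ s) f hne
  exact sum_le_sum_of_card_eq_of_le_of_ge hcard'
    (fun y hy => htop x (mem_sdiff.1 hx).1 y (mem_sdiff.1 hy).2) hxmin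

theorem sum_add_single_sub_single (t : Finset ι) (β : ι → ℝ) (p q : ι) (d : ℝ) :
    ∑ k ∈ t, (β + Pi.single q d - Pi.single p d : ι → ℝ) k
      = ∑ k ∈ t, β k + (if q ∈ t then d else 0) - (if p ∈ t then d else 0) := by
  simp only [Pi.add_apply, Pi.sub_apply, sum_sub_distrib, sum_add_distrib, sum_pi_single']

theorem isTransfer_add_single_sub_single {β : ι → ℝ} {p q : ι} {d : ℝ} (hpq : p ≠ q)
    (hd : |β p - β q - 2 * d| ≤ |β p - β q|) :
    IsTransfer β (β + Pi.single q d - Pi.single p d : ι → ℝ) := by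
  refine ⟨p, q, hpq, fun k hkp hkq => ?_, ?_, ?_⟩
  · simp [hkp, hkq]
  · simp [hpq, hpq.symm]
  · convert hd using 2
    simp [hpq, hpq.symm]
    ring

theorem reflTransGen_isTransfer_comp_swap (β : ι → ℝ) (p q : ι) :
    Relation.ReflTransGen IsTransfer β (β ∘ Equiv.swap p q) := by
  rcases eq_or_ne p q with rfl | hpq
  · simp only [Equiv.swap_self, Equiv.coe_refl, Function.comp_id]
    exact .refl
  refine .single ⟨p, q, hpq, fun k hkp hkq => ?_, ?_, ?_⟩
  · simp [Equiv.swap_apply_of_ne_of_ne hkp hkq]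
  · simp [add_comm]
  · simp [abs_sub_comm]

namespace IsMajorizedOn

variable {S : Finset ι} {α β : ι → ℝ}

theorem comp_swap (h : IsMajorizedOn S α β) {p q : ι} (hp : p ∈ S) (hq : q ∈ S) :
    IsMajorizedOn S α (β ∘ Equiv.swap p q) := by
  have hsupp : {k | Equiv.swap p q k ≠ k} ⊆ S := fun k hk => by
    obtain ⟨-, rfl | rfl⟩ := Equiv.swap_apply_ne_self_iff.1 hk <;> assumption
  obtain ⟨hsumS, hsub⟩ := h
  refine ⟨hsumS.trans (Equiv.Perm.sum_comp _ S β hsupp).symm, fun s hs => ?_⟩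
  obtain ⟨t, htS, hcard, hle⟩ := hsub s hs
  refine ⟨t.map (Equiv.swap p q).toEmbedding, map_perm hsupp ▸ map_subset_map.2 htS,
    by rw [card_map, hcard], ?_⟩
  simpa [sum_map] using hle

theorem add_single_sub_single (h : IsMajorizedOn S α β) {p q : ι} {a : ℝ} (hp : p ∈ S)
    (hq : q ∈ S) (hpq : p ≠ q) (hα : ∀ k ∈ S, α k ≤ a) (hap : a ≤ β p)
    (hqmax : ∀ k ∈ S, k ≠ p → β k ≤ a → β k ≤ β q) :
    IsMajorizedOn S α (β + Pi.single q (β p - a) - Pi.single p (β p - a) : ι → ℝ) := by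
  set β' : ι → ℝ := β + Pi.single q (β p - a) - Pi.single p (β p - a)
  have hsum := sum_add_single_sub_single (β := β) (p := p) (q := q) (d := β p - a)
  refine ⟨by rw [hsum, if_pos hq, if_pos hp, ← h.1]; ring, fun s hs => ?_⟩
  obtain ⟨t, htS, hcard, hle⟩ := h.2 s hs
  suffices key : ∃ t' ⊆ S, #t' = #t ∧
      (∑ k ∈ t, β k ≤ ∑ k ∈ t', β' k ∨ ∀ k ∈ t', a ≤ β' k) by
    obtain ⟨t', ht'S, hcard', hle' | hge⟩ := key
    · exact ⟨t', ht'S, hcard'.trans hcard, hle.trans hle'⟩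
    · exact ⟨t', ht'S, hcard'.trans hcard, sum_le_sum_of_card_eq_of_le_of_ge
        (hcard'.trans hcard).symm (fun k hk => hα k (hs hk)) hge⟩
  by_cases hpt : p ∈ t
  swap
  · refine ⟨t, htS, rfl, .inl ?_⟩
    rw [hsum, if_neg hpt]
    split_ifs <;> linarith
  by_cases hqt : q ∈ t
  · exact ⟨t, htS, rfl, .inl (by rw [hsum, if_pos hpt, if_pos hqt]; linarith)⟩
  by_cases hw : ∃ w ∈ t, w ≠ p ∧ β w ≤ a
  · obtain ⟨w, hwt, hwp, hwa⟩ := hw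
    have hqw : q ∉ t.erase w := fun h => hqt (mem_of_mem_erase h)
    refine ⟨insert q (t.erase w), insert_subset hq ((erase_subset w t).trans htS), ?_, .inl ?_⟩
    · rw [card_insert_of_notMem hqw, card_erase_of_mem hwt]
      have := card_pos.2 ⟨p, hpt⟩
      omega
    · rw [hsum, if_pos (mem_insert_self q _),
        if_pos (mem_insert_of_mem (mem_erase.2 ⟨hwp.symm, hpt⟩)), sum_insert hqw,
        sum_erase_eq_sub hwt]
      linarith [hqmax w (htS hwt) hwp hwa]
  · push Not at hw
    refine ⟨t, htS, rfl, .inr fun k hk => ?_⟩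
    rcases eq_or_ne k p with rfl | hkp
    · simp [β', hpq]
    · have hkq : k ≠ q := fun h => hqt (h ▸ hk)
      simpa [β', hkp, hkq] using (hw k hk hkp).le

theorem erase (h : IsMajorizedOn S α β) {i : ι} (hi : i ∈ S) (hα : ∀ k ∈ S, α k ≤ α i)
    (hβ : β i = α i) : IsMajorizedOn (S.erase i) α β := by
  refine ⟨by rw [sum_erase_eq_sub hi, sum_erase_eq_sub hi, h.1, hβ], fun s hs => ?_⟩
  have his : i ∉ s := fun h => (mem_erase.1 (hs h)).1 rfl
  obtain ⟨t, htS, hcard, hle⟩ :=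
    h.2 (insert i s) (insert_subset hi (hs.trans (erase_subset i S)))
  rw [card_insert_of_notMem his] at hcard
  rw [sum_insert his] at hle
  by_cases hit : i ∈ t
  · refine ⟨t.erase i, erase_subset_erase i htS, by rw [card_erase_of_mem hit, hcard]; rfl, ?_⟩
    rw [sum_erase_eq_sub hit, hβ]
    linarith
  obtain ⟨w, hwt, hwmin⟩ := exists_min_image t β (card_pos.1 (by omega))
  have hwt' : t.erase w ⊆ S.erase i := fun k hk =>
    mem_erase.2 ⟨fun h => hit (h ▸ mem_of_mem_erase hk), htS (mem_of_mem_erase hk)⟩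
  refine ⟨t.erase w, hwt', by rw [card_erase_of_mem hwt, hcard]; rfl, ?_⟩
  by_cases hwi : β w ≤ α i
  · rw [sum_erase_eq_sub hwt]
    linarith
  · push Not at hwi
    refine sum_le_sum_of_card_eq_of_le_of_ge (a := α i) ?_
      (fun k hk => hα k (mem_of_mem_erase (hs hk)))
      fun k hk => hwi.le.trans (hwmin k (mem_of_mem_erase hk))
    rw [card_erase_of_mem hwt, hcard]; rfl

theorem exists_ne_le (h : IsMajorizedOn S α β) {i p : ι} (hi : i ∈ S) (hp : p ∈ S)
    (hα : ∀ k ∈ S, α k ≤ α i) (hap : α i ≤ β p) (hne : β i ≠ α i) :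
    ∃ q ∈ S, q ≠ p ∧ β q ≤ α i := by
  by_contra! hgt
  rcases (S.erase p).eq_empty_or_nonempty with hSp | ⟨k, hk⟩
  · have hip : i = p := by
      by_contra hip
      simpa [hSp] using mem_erase.2 ⟨hip, hi⟩
    subst hip
    have hS : S = {i} := by rw [← insert_erase hi, hSp]; rfl
    exact hne (by simpa [hS] using h.1.symm)
  · have := sum_lt_sum (s := S.erase p) (fun k hk => (hα k (mem_of_mem_erase hk)).trans
        (hgt k (mem_of_mem_erase hk) (ne_of_mem_erase hk)).le)
      ⟨k, hk, (hα k (mem_of_mem_erase hk)).trans_lt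
        (hgt k (mem_of_mem_erase hk) (ne_of_mem_erase hk))⟩
    have hsum := h.1
    rw [← add_sum_erase S _ hp, ← add_sum_erase S _ hp] at hsum
    linarith [hα p hp]

theorem exists_reflTransGen_eq (h : IsMajorizedOn S α β) {i : ι} (hi : i ∈ S)
    (hα : ∀ k ∈ S, α k ≤ α i) :
    ∃ β', Relation.ReflTransGen IsTransfer β β' ∧ IsMajorizedOn S α β' ∧ β' i = α i ∧
      ∀ k ∉ S, β' k = β k := by
  by_cases hne : β i = α i
  · exact ⟨β, .refl, h, hne, fun _ _ => rfl⟩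
  -- Lower some `β p ≥ α i` to `α i`, giving the excess to the largest other `β q ≤ α i`
  -- (this choice of `q` keeps the majorization), then swap `p` and `i`.
  obtain ⟨p, hp, hap⟩ := h.exists_le hi
  obtain ⟨q, hqC, hqmax⟩ := exists_max_image (S.filter fun k => k ≠ p ∧ β k ≤ α i) β <| by
    obtain ⟨q, hq, hqp, hqa⟩ := h.exists_ne_le hi hp hα hap hne
    exact ⟨q, mem_filter.2 ⟨hq, hqp, hqa⟩⟩
  obtain ⟨hq, hqp, hqa⟩ := mem_filter.1 hqC
  set β' : ι → ℝ := β + Pi.single q (β p - α i) - Pi.single p (β p - α i)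
  have hβ'p : β' p = α i := by simp [β', hqp.symm]
  have htransfer : IsTransfer β β' := isTransfer_add_single_sub_single hqp.symm <| by
    rw [abs_of_nonneg (a := β p - β q) (by linarith), abs_le]
    constructor <;> linarith
  refine ⟨β' ∘ Equiv.swap p i, (Relation.ReflTransGen.single htransfer).trans
      (reflTransGen_isTransfer_comp_swap β' p i),
    (h.add_single_sub_single hp hq hqp.symm hα hap fun k hk hkp hka =>
      hqmax k (mem_filter.2 ⟨hk, hkp, hka⟩)).comp_swap hp hi,
    by simp [hβ'p], fun k hk => ?_⟩
  have hkp : k ≠ p := fun h => hk (h ▸ hp)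
  have hkq : k ≠ q := fun h => hk (h ▸ hq)
  simp [β', Equiv.swap_apply_of_ne_of_ne hkp (fun h => hk (h ▸ hi)), hkp, hkq]

theorem reflTransGen_isTransfer (h : IsMajorizedOn S α β) (hout : ∀ k ∉ S, β k = α k) :
    Relation.ReflTransGen IsTransfer β α := by
  induction S using Finset.strongInduction generalizing β with
  | H S ih =>
    rcases S.eq_empty_or_nonempty with rfl | hS
    · rw [funext fun k => hout k (notMem_empty k)]
    obtain ⟨i, hi, hα⟩ := exists_max_image S α hS
    obtain ⟨β', hββ', h', hβ'i, hβ'out⟩ := h.exists_reflTransGen_eq hi hα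
    refine hββ'.trans (ih _ (erase_ssubset hi) (h'.erase hi hα hβ'i) fun k hk => ?_)
    rcases eq_or_ne k i with rfl | hki
    · exact hβ'i
    · have hkS : k ∉ S := fun h => hk (mem_erase.2 ⟨hki, h⟩)
      rw [hβ'out k hkS, hout k hkS]

end IsMajorizedOn

theorem IsMajorizedBy.isMajorizedOn_univ {n : ℕ} {α β : Fin n → ℝ} (h : IsMajorizedBy α β) :
    IsMajorizedOn univ α β := by
  refine ⟨h.1, fun s _ => ?_⟩
  rcases s.eq_empty_or_nonempty with rfl | hs
  · exact ⟨∅, empty_subset _, rfl, le_rfl⟩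
  have hsn : #s ≤ n := by simpa using card_le_univ s
  set k : Fin n := ⟨n - #s, by have := hs.card_pos; omega⟩
  have hk : #(Ici k) = #s := by simp [k]; omega
  refine ⟨(Ici k).map (Tuple.sort β).toEmbedding, subset_univ _, by rw [card_map, hk], ?_⟩
  calc ∑ i ∈ s, α i ≤ ∑ i ∈ (Ici k).map (Tuple.sort α).toEmbedding, α i := by
        refine sum_le_sum_of_card_eq_of_dominates (by rw [card_map, hk]) fun x hx y hy => ?_
        obtain ⟨i, hi, rfl⟩ := mem_map.1 hx
        obtain ⟨l, rfl⟩ := (Tuple.sort α).surjective y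
        have hli : l ≤ i := by
          by_contra! hil
          exact hy (mem_map.2 ⟨l, mem_Ici.2 ((mem_Ici.1 hi).trans hil.le), rfl⟩)
        exact Tuple.monotone_sort α hli
    _ ≤ ∑ i ∈ (Ici k).map (Tuple.sort β).toEmbedding, β i := by
        simpa [sum_map] using h.2 k

end Majorization

open Real Set

theorem exp_add_add_exp_add (a b x y : ℝ) :
    exp (a + x) + exp (b + y)
      = 2 * exp ((a + b) / 2 + (x + y) / 2) * cosh ((x - y) / 2 + (a - b) / 2) := by
  rw [cosh_eq, show ∀ c u w : ℝ, 2 * c * ((u + w) / 2) = c * u + c * w by intros; ring,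
    ← exp_add, ← exp_add]
  congr 1 <;> congr 1 <;> ring

theorem lt_mul_cosh_iff {K s y : ℝ} (hK : 0 < K) (hs : K ≤ s) :
    s < K * cosh y ↔ arcosh (s / K) < |y| := by
  have h1 : 1 ≤ s / K := (one_le_div hK).2 hs
  conv_lhs => rw [← div_lt_iff₀' hK, ← cosh_arcosh h1]
  rw [cosh_lt_cosh, abs_of_nonneg (arcosh_nonneg h1)]

theorem ProbabilityTheory.IndepFun.measure_preimage_le {Ω α β : Type*} [MeasurableSpace Ω]
    [MeasurableSpace α] [MeasurableSpace β] {P : Measure Ω} [IsFiniteMeasure P] {R : Ω → α}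
    {V : Ω → β} (hR : Measurable R) (hV : Measurable V) (hRV : IndepFun R V P) {S S' : Set (α × β)}
    (hS : MeasurableSet S) (hS' : MeasurableSet S')
    (h : ∀ r, P.map V (Prod.mk r ⁻¹' S) ≤ P.map V (Prod.mk r ⁻¹' S')) :
    P ((fun ω => (R ω, V ω)) ⁻¹' S) ≤ P ((fun ω => (R ω, V ω)) ⁻¹' S') := by
  rw [← Measure.map_apply (hR.prodMk hV) hS, ← Measure.map_apply (hR.prodMk hV) hS',
    (indepFun_iff_map_prod_eq_prod_map_map hR.aemeasurable hV.aemeasurable).1 hRV,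
    Measure.prod_apply hS, Measure.prod_apply hS']
  exact lintegral_mono h

theorem intervalIntegral_centered_le_of_abs_le {f : ℝ → ℝ} (hf : Continuous f)
    (hsymm : ∀ x y, |x| ≤ |y| → f y ≤ f x) {m c c' : ℝ} (hm : 0 ≤ m) (hc : |c| ≤ |c'|) :
    ∫ x in c' - m..c' + m, f x ≤ ∫ x in c - m..c + m, f x := by
  have heven : ∀ d, ∫ x in -d - m..-d + m, f x = ∫ x in d - m..d + m, f x := fun d => by
    rw [show -d - m = -(d + m) by ring, show -d + m = -(d - m) by ring,
      ← intervalIntegral.integral_comp_neg]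
    congr 1 with x
    exact le_antisymm (hsymm _ _ (abs_neg x).ge) (hsymm _ _ (abs_neg x).le)
  have habs : ∀ d, ∫ x in d - m..d + m, f x = ∫ x in |d| - m..|d| + m, f x := fun d => by
    rcases abs_cases d with ⟨h, -⟩ | ⟨h, -⟩ <;> rw [h]
    rw [heven]
  rw [habs c, habs c']
  have hint : ∀ a b, IntervalIntegrable f volume a b := fun _ _ => hf.intervalIntegrable _ _
  set d := |c|
  set d' := |c'|
  have hd : 0 ≤ d := abs_nonneg c
  have hleft := intervalIntegral.integral_add_adjacent_intervals (hint (d - m) (d + m))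
    (hint (d + m) (d' + m))
  have hright := intervalIntegral.integral_add_adjacent_intervals (hint (d - m) (d' - m))
    (hint (d' - m) (d' + m))
  -- `[d + m, d' + m]` is `[d - m, d' - m]` moved by `2 * m` away from the origin.
  have hshift : ∫ x in d + m..d' + m, f x ≤ ∫ x in d - m..d' - m, f x := by
    rw [show d + m = d - m + 2 * m by ring, show d' + m = d' - m + 2 * m by ring,
      ← intervalIntegral.integral_comp_add_right]
    refine intervalIntegral.integral_mono_on (by linarith)
      ((hf.comp (continuous_add_const _)).intervalIntegrable _ _) (hint _ _) fun x hx => ?_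
    refine hsymm _ _ ?_
    rw [abs_of_nonneg (a := x + 2 * m) (by linarith [hx.1])]
    exact abs_le.2 ⟨by linarith [hx.1], by linarith⟩
  linarith

theorem gaussianReal_zero_lt_abs_add_le (v : NNReal) {m δ δ' : ℝ} (hm : 0 ≤ m) (h : |δ| ≤ |δ'|) :
    gaussianReal 0 v {x | m < |x + δ|} ≤ gaussianReal 0 v {x | m < |x + δ'|} := by
  have hmeas : ∀ d : ℝ, MeasurableSet {x : ℝ | m < |x + d|} := fun d =>
    measurableSet_lt measurable_const (by fun_prop)
  rcases eq_or_ne v 0 with rfl | hv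
  · simp only [gaussianReal_zero_var, Measure.dirac_apply' _ (hmeas _)]
    by_cases hδ : m < |δ|
    · rw [indicator_of_mem (by simpa using hδ), indicator_of_mem (by simpa using hδ.trans_le h)]
    · rw [indicator_of_notMem (by simpa using hδ)]
      exact bot_le
  have hcompl : ∀ d : ℝ, {x : ℝ | m < |x + d|} = (Icc (-d - m) (-d + m))ᶜ := fun d => by
    ext x
    simp only [mem_ofPred_eq, mem_compl_iff, mem_Icc, not_and_or, not_le, lt_abs]
    constructor <;> rintro (h | h) <;> first | (left; linarith) | (right; linarith)
  have hball : ∀ d : ℝ, gaussianReal 0 v (Icc (-d - m) (-d + m))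
      = ENNReal.ofReal (∫ x in -d - m..-d + m, gaussianPDFReal 0 v x) := fun d => by
    rw [gaussianReal_apply_eq_integral _ hv, integral_Icc_eq_integral_Ioc,
      intervalIntegral.integral_of_le (by linarith)]
  rw [hcompl, hcompl, prob_compl_eq_one_sub measurableSet_Icc,
    prob_compl_eq_one_sub measurableSet_Icc, hball, hball]
  refine tsub_le_tsub_left (ENNReal.ofReal_le_ofReal ?_) _
  refine intervalIntegral_centered_le_of_abs_le (by unfold gaussianPDFReal; fun_prop)
    (fun x y hxy => ?_) hm (by rwa [abs_neg, abs_neg])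
  unfold gaussianPDFReal
  gcongr _ * exp (-?_ / _)
  simpa only [sub_zero, sq_abs] using pow_le_pow_left₀ (abs_nonneg x) hxy 2

theorem gaussianReal_zero_lt_mul_cosh_add_le (v : NNReal) {K s δ δ' : ℝ} (hK : 0 < K)
    (h : |δ| ≤ |δ'|) :
    gaussianReal 0 v {x | s < K * cosh (x + δ)}
      ≤ gaussianReal 0 v {x | s < K * cosh (x + δ')} := by
  rcases lt_or_ge s K with hs | hs
  · have huniv : ∀ d, {x | s < K * cosh (x + d)} = univ := fun d =>
      eq_univ_of_forall fun x => hs.trans_le (le_mul_of_one_le_right hK.le (one_le_cosh _))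
    rw [huniv, huniv]
  · simp_rw [lt_mul_cosh_iff hK hs]
    exact gaussianReal_zero_lt_abs_add_le v (arcosh_nonneg ((one_le_div hK).2 hs)) h

section Rotation

variable {ν : Measure ℝ} [IsGaussian ν]

theorem indepFun_add_div_two_sub_div_two :
    IndepFun (fun p : ℝ × ℝ => (p.1 + p.2) / 2) (fun p : ℝ × ℝ => (p.1 - p.2) / 2)
      (ν.prod ν) := by
  let L : ℝ × ℝ →L[ℝ] ℝ × ℝ :=
    ((1 / 2 : ℝ) • (ContinuousLinearMap.fst ℝ ℝ ℝ + ContinuousLinearMap.snd ℝ ℝ ℝ)).prod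
      ((1 / 2 : ℝ) • (ContinuousLinearMap.fst ℝ ℝ ℝ - ContinuousLinearMap.snd ℝ ℝ ℝ))
  have hG : HasGaussianLaw (fun p : ℝ × ℝ => ((p.1 + p.2) / 2, (p.1 - p.2) / 2)) (ν.prod ν) := by
    have e : (fun p : ℝ × ℝ => ((p.1 + p.2) / 2, (p.1 - p.2) / 2)) = L := by
      funext p; simp [L]; constructor <;> ring
    rw [e]
    exact (IsGaussian.hasGaussianLaw_id (μ := ν.prod ν)).map L
  refine hG.indepFun_of_covariance_eq_zero ?_
  -- Swapping the coordinates preserves `ν.prod ν`, fixes the first function and negates the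
  -- second, so the covariance equals its own negative.
  have h := covariance_map_equiv (μ := ν.prod ν) (fun p : ℝ × ℝ => (p.1 + p.2) / 2)
    (fun p : ℝ × ℝ => (p.1 - p.2) / 2) MeasurableEquiv.prodComm
  rw [show (ν.prod ν).map MeasurableEquiv.prodComm = ν.prod ν from Measure.prod_swap] at h
  have h1 : (fun p : ℝ × ℝ => (p.1 + p.2) / 2) ∘ MeasurableEquiv.prodComm
      = fun p => (p.1 + p.2) / 2 := by
    funext p; simp [MeasurableEquiv.prodComm]; ring
  have h2 : (fun p : ℝ × ℝ => (p.1 - p.2) / 2) ∘ MeasurableEquiv.prodComm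
      = fun p => -((p.1 - p.2) / 2) := by
    funext p; simp [MeasurableEquiv.prodComm]; ring
  rw [h1, h2, covariance_fun_neg_right] at h
  linarith

theorem exists_map_sub_div_two_eq_gaussianReal :
    ∃ σ : NNReal, (ν.prod ν).map (fun p : ℝ × ℝ => (p.1 - p.2) / 2) = gaussianReal 0 σ := by
  let L : ℝ × ℝ →L[ℝ] ℝ :=
    (1 / 2 : ℝ) • (ContinuousLinearMap.fst ℝ ℝ ℝ - ContinuousLinearMap.snd ℝ ℝ ℝ)
  have hG : HasGaussianLaw (fun p : ℝ × ℝ => (p.1 - p.2) / 2) (ν.prod ν) := by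
    have e : (fun p : ℝ × ℝ => (p.1 - p.2) / 2) = L := by
      funext p; simp [L]; ring
    rw [e]
    exact (IsGaussian.hasGaussianLaw_id (μ := ν.prod ν)).map L
  have hmean : ∫ p, (p.1 - p.2) / 2 ∂(ν.prod ν) = 0 := by
    have h := integral_prod_swap (μ := ν) (ν := ν) (fun p : ℝ × ℝ => (p.1 - p.2) / 2)
    simp only [Prod.fst_swap, Prod.snd_swap] at h
    rw [show (fun p : ℝ × ℝ => (p.2 - p.1) / 2) = fun p => -((p.1 - p.2) / 2) by
      funext p; ring, integral_neg] at h
    linarith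
  exact ⟨_, hmean ▸ hG.map_eq_gaussianReal⟩

end Rotation

theorem measure_prod_self_lt_exp_add_exp_le {ν : Measure ℝ} [IsGaussian ν] {a₁ a₂ b₁ b₂ : ℝ}
    (hsum : a₁ + a₂ = b₁ + b₂) (hgap : |a₁ - a₂| ≤ |b₁ - b₂|) (s : ℝ) :
    (ν.prod ν) {p | s < exp (a₁ + p.1) + exp (a₂ + p.2)}
      ≤ (ν.prod ν) {p | s < exp (b₁ + p.1) + exp (b₂ + p.2)} := by
  obtain ⟨σ, hσ⟩ := exists_map_sub_div_two_eq_gaussianReal (ν := ν)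
  have hset : ∀ c₁ c₂ : ℝ, {p : ℝ × ℝ | s < exp (c₁ + p.1) + exp (c₂ + p.2)}
      = (fun p : ℝ × ℝ => ((p.1 + p.2) / 2, (p.1 - p.2) / 2)) ⁻¹'
          {q | s < 2 * exp ((c₁ + c₂) / 2 + q.1) * cosh (q.2 + (c₁ - c₂) / 2)} :=
    fun c₁ c₂ => by
    ext p
    simp only [mem_preimage, mem_ofPred_eq, exp_add_add_exp_add]
  have hmeas : ∀ c₁ c₂ : ℝ, MeasurableSet
      {q : ℝ × ℝ | s < 2 * exp ((c₁ + c₂) / 2 + q.1) * cosh (q.2 + (c₁ - c₂) / 2)} :=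
    fun _ _ => measurableSet_lt measurable_const (by fun_prop)
  rw [hset, hset]
  refine indepFun_add_div_two_sub_div_two.measure_preimage_le (by fun_prop) (by fun_prop)
    (hmeas _ _) (hmeas _ _) fun u => ?_
  rw [hσ, hsum]
  refine gaussianReal_zero_lt_mul_cosh_add_le (s := s) (K := 2 * exp ((b₁ + b₂) / 2 + u)) σ
    (by positivity) ?_
  simpa [abs_div] using div_le_div_of_nonneg_right hgap zero_le_two

theorem ProbabilityTheory.iIndepFun.indepFun_sum_prodMk {Ω ι E : Type*} [MeasurableSpace Ω]
    [MeasurableSpace E] {P : Measure Ω} [DecidableEq ι] {Z : ι → Ω → E} (hind : iIndepFun Z P)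
    (hZ : ∀ k, Measurable (Z k)) {T : Finset ι} {i j : ι} (hi : i ∉ T) (hj : j ∉ T)
    {g : ι → E → ℝ} (hg : ∀ k, Measurable (g k)) :
    IndepFun (fun ω => ∑ k ∈ T, g k (Z k ω)) (fun ω => (Z i ω, Z j ω)) P := by
  have hdisj : Disjoint T {i, j} := by simp [Finset.disjoint_left]; grind
  have hi' : i ∈ ({i, j} : Finset ι) := by simp
  have hj' : j ∈ ({i, j} : Finset ι) := by simp
  have h := (hind.indepFun_finset T {i, j} hdisj hZ).comp
    (φ := fun x : T → E => ∑ k : T, g k (x k)) (ψ := fun x => (x ⟨i, hi'⟩, x ⟨j, hj'⟩))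
    (Finset.measurable_sum _ fun k _ => (hg k).comp (measurable_pi_apply k)) (by fun_prop)
  convert h using 1
  · funext ω
    exact (Finset.sum_coe_sort T fun k => g k (Z k ω)).symm
  · rfl

theorem measure_lt_sum_exp_add_le_of_isTransfer {Ω ι : Type*} [MeasurableSpace Ω]
    {P : Measure Ω} [IsFiniteMeasure P] [Fintype ι] [DecidableEq ι] {Z : ι → Ω → ℝ}
    {ν : Measure ℝ} [IsGaussian ν] (hZ : ∀ k, Measurable (Z k)) (hind : iIndepFun Z P)
    (hlaw : ∀ k, P.map (Z k) = ν) {β β' : ι → ℝ} (h : IsTransfer β β') (t : ℝ) :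
    P {ω | t < ∑ k, exp (β' k + Z k ω)} ≤ P {ω | t < ∑ k, exp (β k + Z k ω)} := by
  obtain ⟨i, j, hij, hoff, hsum, hgap⟩ := h
  have hiT : i ∉ ({i, j}ᶜ : Finset ι) := by simp
  have hjT : j ∉ ({i, j}ᶜ : Finset ι) := by simp
  have hm : ∀ k, Measurable fun x => exp (β k + x) := fun k => by fun_prop
  have hRV := hind.indepFun_sum_prodMk hZ hiT hjT hm
  have hV : P.map (fun ω => (Z i ω, Z j ω)) = ν.prod ν := by
    rw [(indepFun_iff_map_prod_eq_prod_map_map (hZ i).aemeasurable (hZ j).aemeasurable).1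
      (hind.indepFun hij), hlaw, hlaw]
  have hevent : ∀ γ : ι → ℝ, (∀ k ∈ ({i, j}ᶜ : Finset ι), γ k = β k) →
      {ω | t < ∑ k, exp (γ k + Z k ω)}
        = (fun ω => (∑ k ∈ {i, j}ᶜ, exp (β k + Z k ω), (Z i ω, Z j ω))) ⁻¹'
          {q | t - q.1 < exp (γ i + q.2.1) + exp (γ j + q.2.2)} := fun γ hγ => by
    ext ω
    rw [mem_ofPred_eq, mem_preimage, mem_ofPred_eq, ← Finset.sum_add_sum_compl {i, j},
      Finset.sum_pair hij, Finset.sum_congr rfl fun k hk => by rw [hγ k hk]]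
    constructor <;> intro h <;> linarith
  have hmeas : ∀ γ : ι → ℝ, MeasurableSet
      {q : ℝ × ℝ × ℝ | t - q.1 < exp (γ i + q.2.1) + exp (γ j + q.2.2)} :=
    fun _ => measurableSet_lt (by fun_prop) (by fun_prop)
  rw [hevent β' fun k hk => hoff k (by rintro rfl; exact hiT hk) (by rintro rfl; exact hjT hk),
    hevent β fun _ _ => rfl]
  refine hRV.measure_preimage_le (by fun_prop) (by fun_prop) (hmeas _) (hmeas _) fun r => ?_
  rw [hV]
  exact measure_prod_self_lt_exp_add_exp_le hsum hgap (t - r)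

theorem measure_lt_sum_exp_add_le_of_reflTransGen {Ω ι : Type*} [MeasurableSpace Ω]
    {P : Measure Ω} [IsFiniteMeasure P] [Fintype ι] [DecidableEq ι] {Z : ι → Ω → ℝ}
    {ν : Measure ℝ} [IsGaussian ν] (hZ : ∀ k, Measurable (Z k)) (hind : iIndepFun Z P)
    (hlaw : ∀ k, P.map (Z k) = ν) {β β' : ι → ℝ} (h : Relation.ReflTransGen IsTransfer β β')
    (t : ℝ) : P {ω | t < ∑ k, exp (β' k + Z k ω)} ≤ P {ω | t < ∑ k, exp (β k + Z k ω)} := by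
  induction h with
  | refl => exact le_rfl
  | tail _ hstep ih =>
    exact (measure_lt_sum_exp_add_le_of_isTransfer hZ hind hlaw hstep t).trans ih

theorem lognormal_weighted_sums_st_order_general
    {Ω : Type*} [MeasurableSpace Ω] (P : Measure Ω) [IsProbabilityMeasure P]
    (n : ℕ) (Y Z : Fin n → Ω → ℝ) (μ : ℝ) (v : NNReal)
    (hY_meas : ∀ i, Measurable (Y i))
    (h_indep : iIndepFun Y P)
    (hYZ : ∀ i, ∀ ω, Y i ω = Real.exp (Z i ω))
    (hZ_law : ∀ i, P.map (Z i) = gaussianReal μ v)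
    (a b : Fin n → ℝ) (ha : ∀ i, 0 < a i) (hb : ∀ i, 0 < b i)
    (hmaj : IsMajorizedBy (fun i => Real.log (a i)) (fun i => Real.log (b i))) :
    ∀ t : ℝ, P {ω | t < ∑ i, a i * Y i ω} ≤ P {ω | t < ∑ i, b i * Y i ω} := by
  intro t
  have hZY : Z = fun k ω => log (Y k ω) := by
    funext k ω
    rw [hYZ, log_exp]
  have hZ : ∀ k, Measurable (Z k) := fun k => hZY ▸ (hY_meas k).log
  have hind : iIndepFun Z P := hZY ▸ h_indep.comp (fun _ => log) fun _ => measurable_log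
  have hevent : ∀ c : Fin n → ℝ, (∀ k, 0 < c k) →
      {ω | t < ∑ k, c k * Y k ω} = {ω | t < ∑ k, exp (log (c k) + Z k ω)} := fun c hc => by
    simp only [exp_add, exp_log (hc _), hYZ]
  rw [hevent a ha, hevent b hb]
  exact measure_lt_sum_exp_add_le_of_reflTransGen hZ hind hZ_law
    (hmaj.isMajorizedOn_univ.reflTransGen_isTransfer fun k hk => (hk (Finset.mem_univ k)).elim) t

theorem lognormal_weighted_sums_st_order
    {Ω : Type*} [MeasurableSpace Ω] (P : Measure Ω) [IsProbabilityMeasure P]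
    (n : ℕ) (Y Z : Fin n → Ω → ℝ) (μ : ℝ) (v : NNReal) (hv : 0 < v)
    (hY_meas : ∀ i, Measurable (Y i))
    (h_indep : iIndepFun Y P)
    (hYZ : ∀ i, ∀ ω, Y i ω = Real.exp (Z i ω))
    (hZ_law : ∀ i, P.map (Z i) = gaussianReal μ v)
    (a b : Fin n → ℝ) (ha : ∀ i, 0 < a i) (hb : ∀ i, 0 < b i)
    (hmaj : IsMajorizedBy (fun i => Real.log (a i)) (fun i => Real.log (b i))) :
    ∀ t : ℝ, P {ω | t < ∑ i, a i * Y i ω} ≤ P {ω | t < ∑ i, b i * Y i ω} :=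
  lognormal_weighted_sums_st_order_general P n Y Z μ v hY_meas h_indep hYZ hZ_law a b ha hb hmaj
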